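/- Let f : ℝ^d → ℝ be differentiable with blockwise Lipschitz constants L_j (i.e., ‖∇_j f(x) − ∇_j f(x + U_j α)‖ ≤ L_j‖α‖ for any block perturbation α in block j, where U_j embeds ℝ^{d_j} into ℝ^d), let h_j be proper closed convex, Ψ(x) = f(x) + ∑_j h_j(x_j), and η > 0. Fix a block j, set y_j = prox_{ηh_j}(x_j − ηg_j) for some g_j ∈ ℝ^{d_j}, and let y agree with x on all blocks j' ≠ j. Then for all z ∈ ℝ^d that agree with x on blocks j' ≠ j: Ψ(y) ≤ Ψ(z) + ⟨∇_j f(x) − g_j, y_j − z_j⟩ + (L_j/2 − 1/(2η))‖y_j − x_j‖² + (L_j/2 + 1/(2η))‖z_j − x_j‖² − (1/(2η))‖y_j − z_j‖². -/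

import Mathlib

/-!
Along the segment from `x` to a point that differs from `x` only in block `j`, the derivative of
`f` is `⟪∇_j f, ·⟫`, which moves at most linearly by the blockwise Lipschitz bound; integrating
gives the two-sided descent estimate `|f v - f u - ⟪∇_j f u, v_j - u_j⟫| ≤ L_j/2 ‖v_j - u_j‖²`,
used as an upper bound at `y` and as a lower bound at `z`. On the other side, the prox objective
`h_j + ‖· - (x_j - η g_j)‖² / (2η)` is `1/η`-strongly convex, so its minimiser `y_j` beats any
`z_j` by `‖z_j - y_j‖² / (2η)`. Expanding the squares around `x_j` and adding the three
inequalities gives the claim; the blocks other than `j` contribute equally to `Ψ(y)` and `Ψ(z)`.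
-/

open scoped RealInnerProductSpace
open Set Filter Topology

section Prox

variable {E : Type*} [NormedAddCommGroup E]

theorem StrongConvexOn.le_sub_of_isMinOn [NormedSpace ℝ E] {s : Set E} {m : ℝ} {f : E → ℝ}
    (hf : StrongConvexOn s m f) {y : E} (hy : y ∈ s) (hmin : IsMinOn f s y) {w : E}
    (hw : w ∈ s) : f y ≤ f w - m / 2 * ‖w - y‖ ^ 2 := by
  set K := m / 2 * ‖w - y‖ ^ 2
  -- compare `y` with the points `(1 - t) • y + t • w` and let `t → 0⁺`
  have hsegment : ∀ t ∈ Ioc (0 : ℝ) 1, f y ≤ f w - K + t * K := by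
    rintro t ⟨ht0, ht1⟩
    have hmin_t := hmin (hf.1 hy hw (sub_nonneg.2 ht1) ht0.le (sub_add_cancel 1 t))
    have hconv := hf.2 hy hw (sub_nonneg.2 ht1) ht0.le (sub_add_cancel 1 t)
    rw [smul_eq_mul, smul_eq_mul, norm_sub_rev] at hconv
    simp only [K]
    nlinarith [hmin_t.trans hconv]
  have hlim : Tendsto (fun t : ℝ => f w - K + t * K) (𝓝[>] 0) (𝓝 (f w - K)) := by
    simpa using ((continuous_mul_const K).const_add (f w - K)).tendsto 0 |>.mono_left
      nhdsWithin_le_nhds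
  exact ge_of_tendsto hlim (eventually_of_mem (Ioc_mem_nhdsGT zero_lt_one) hsegment)

variable [InnerProductSpace ℝ E]

theorem ConvexOn.strongConvexOn_add_mul_norm_sub_sq {s : Set E} {φ : E → ℝ}
    (hφ : ConvexOn ℝ s φ) (c : ℝ) (p : E) :
    StrongConvexOn s (2 * c) (fun w => φ w + c * ‖w - p‖ ^ 2) := by
  rw [strongConvexOn_iff_convex]
  have haffine := (((-2 * c) • innerₗ E p).convexOn hφ.1).add_const (c * ‖p‖ ^ 2)
  refine (hφ.add haffine).congr fun w _ => ?_
  simp only [Pi.add_apply, LinearMap.smul_apply, innerₗ_apply_apply, smul_eq_mul,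
    norm_sub_sq_real, real_inner_comm p]
  ring

theorem one_div_two_mul_norm_sub_sub_smul_sq {η : ℝ} (hη : η ≠ 0) (a x g : E) :
    1 / (2 * η) * ‖a - (x - η • g)‖ ^ 2
      = 1 / (2 * η) * ‖a - x‖ ^ 2 + ⟪g, a - x⟫ + η / 2 * ‖g‖ ^ 2 := by
  rw [show a - (x - η • g) = (a - x) + η • g by abel, norm_add_sq_real, real_inner_smul_right,
    real_inner_comm, norm_smul, mul_pow, Real.norm_eq_abs, sq_abs]
  field_simp

end Prox

theorem abs_sub_sub_inner_gradient_le {E : Type*} [NormedAddCommGroup E] [InnerProductSpace ℝ E]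
    [CompleteSpace E] {f : E → ℝ} (hf : Differentiable ℝ f) (u w : E) {C : ℝ}
    (hC : ∀ t ∈ Ico (0 : ℝ) 1, |⟪gradient f (u + t • w) - gradient f u, w⟫| ≤ C * t) :
    |f (u + w) - f u - ⟪gradient f u, w⟫| ≤ C / 2 := by
  set φ : ℝ → ℝ := fun s => f (u + s • w) - f u - s * ⟪gradient f u, w⟫
  have hφ : ∀ t, HasDerivAt φ ⟪gradient f (u + t • w) - gradient f u, w⟫ t := by
    intro t
    have hline : HasDerivAt (fun s : ℝ => u + s • w) w t := by
      simpa using ((hasDerivAt_id t).smul_const w).const_add u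
    have hcomp := (hf (u + t • w)).hasGradientAt.hasFDerivAt.comp_hasDerivAt t hline
    rw [inner_sub_left]
    exact (hcomp.sub_const (f u)).sub (by simpa using (hasDerivAt_id t).mul_const _)
  have hB : ∀ t, HasDerivAt (fun s : ℝ => C / 2 * s ^ 2) (C * t) t := fun t =>
    ((hasDerivAt_pow 2 t).const_mul (C / 2)).congr_deriv (by norm_num; ring)
  have := image_norm_le_of_norm_deriv_right_le_deriv_boundary (f := φ)
    (fun t _ => (hφ t).continuousAt.continuousWithinAt) (fun t _ => (hφ t).hasDerivWithinAt)
    (by simp [φ]) hB hC (right_mem_Icc.2 zero_le_one)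
  simpa [φ] using this

theorem Finset.sum_sub_eq_sum_sub_of_eq_of_ne {ι M : Type*} [Fintype ι] [DecidableEq ι]
    [AddCommGroup M] {β : ι → Type*} (g : ∀ i, β i → M) {x y : ∀ i, β i} {j : ι}
    (hxy : ∀ i ≠ j, x i = y i) :
    ∑ i, g i (x i) - g j (x j) = ∑ i, g i (y i) - g j (y j) := by
  rw [← Finset.sum_erase_eq_sub (mem_univ j), ← Finset.sum_erase_eq_sub (mem_univ j)]
  exact Finset.sum_congr rfl fun i hi => by rw [hxy i (Finset.ne_of_mem_erase hi)]

namespace PiLp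

variable {ι : Type*} [DecidableEq ι] {E : ι → Type*} [∀ i, NormedAddCommGroup (E i)]

theorem eq_add_single_sub_of_eq_of_ne {u v : PiLp 2 E} {j : ι} (hv : ∀ i ≠ j, v i = u i) :
    v = u + single 2 j (v j - u j) := by
  ext i
  by_cases hi : i = j
  · subst hi
    simp
  · simp [hv i hi, hi]

variable [Fintype ι] [∀ i, InnerProductSpace ℝ (E i)]

theorem inner_single_right (x : PiLp 2 E) (j : ι) (a : E j) : ⟪x, single 2 j a⟫ = ⟪x j, a⟫ := by
  rw [PiLp.inner_apply, Finset.sum_eq_single j (fun i _ hi => by simp [hi]) (by simp)]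
  simp

theorem abs_sub_sub_inner_gradient_apply_le [∀ i, CompleteSpace (E i)] {f : PiLp 2 E → ℝ}
    (hf : Differentiable ℝ f) {j : ι} {L : ℝ}
    (hLip : ∀ u v : PiLp 2 E, (∀ i ≠ j, v i = u i) →
      ‖gradient f u j - gradient f v j‖ ≤ L * ‖v j - u j‖)
    {u v : PiLp 2 E} (hv : ∀ i ≠ j, v i = u i) :
    |f v - f u - ⟪gradient f u j, v j - u j⟫| ≤ L / 2 * ‖v j - u j‖ ^ 2 := by
  set a := v j - u j
  have hbound : ∀ t ∈ Ico (0 : ℝ) 1,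
      |⟪gradient f (u + t • single 2 j a) - gradient f u, single 2 j a⟫| ≤ L * ‖a‖ ^ 2 * t := by
    intro t ht
    have hoff : ∀ i ≠ j, (u + t • single 2 j a) i = u i := fun i hi => by simp [hi]
    rw [inner_single_right, PiLp.sub_apply]
    calc |⟪gradient f (u + t • single 2 j a) j - gradient f u j, a⟫|
        ≤ ‖gradient f (u + t • single 2 j a) j - gradient f u j‖ * ‖a‖ :=
          abs_real_inner_le_norm _ _
      _ ≤ L * ‖(u + t • single 2 j a) j - u j‖ * ‖a‖ := by
          rw [norm_sub_rev]
          exact mul_le_mul_of_nonneg_right (hLip u _ hoff) (norm_nonneg a)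
      _ = L * ‖a‖ ^ 2 * t := by
          simp only [add_apply, smul_apply, single_eq_same, add_sub_cancel_left, norm_smul,
            Real.norm_eq_abs, abs_of_nonneg ht.1]
          ring
  have hdesc := abs_sub_sub_inner_gradient_le hf u (single 2 j a) hbound
  rw [← eq_add_single_sub_of_eq_of_ne hv, inner_single_right] at hdesc
  exact hdesc.trans_eq (by ring)

end PiLp

/-- blockwise descent inequality for a single-block prox update. -/
theorem stmt13 {M : ℕ} {d : Fin M → ℕ}
    (f : PiLp 2 (fun j => EuclideanSpace ℝ (Fin (d j))) → ℝ)
    (h : ∀ j, EuclideanSpace ℝ (Fin (d j)) → ℝ)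
    (hconv : ∀ j, ConvexOn ℝ Set.univ (h j))
    (L : Fin M → ℝ)
    (hf : Differentiable ℝ f)
    -- blockwise Lipschitz partial gradients: perturbing only block j changes ∇_j f
    -- at a rate at most `L j` in that block
    (hLip : ∀ (j : Fin M) (u v : PiLp 2 (fun j => EuclideanSpace ℝ (Fin (d j)))),
        (∀ j' ≠ j, v j' = u j') →
        ‖gradient f u j - gradient f v j‖ ≤ L j * ‖v j - u j‖)
    (η : ℝ) (hη : 0 < η) (j : Fin M)
    (x y z : PiLp 2 (fun j => EuclideanSpace ℝ (Fin (d j))))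
    (gj : EuclideanSpace ℝ (Fin (d j)))
    -- y agrees with x off block j and y j is the block-j prox point
    (hyoff : ∀ j' ≠ j, y j' = x j')
    (hyj : ∀ w, h j (y j) + (1 / (2 * η)) * ‖y j - (x j - η • gj)‖ ^ 2 ≤
                h j w + (1 / (2 * η)) * ‖w - (x j - η • gj)‖ ^ 2)
    -- z agrees with x off block j
    (hzoff : ∀ j' ≠ j, z j' = x j') :
    f y + (∑ j', h j' (y j')) ≤
      f z + (∑ j', h j' (z j')) + ⟪gradient f x j - gj, y j - z j⟫
      + (L j / 2 - 1 / (2 * η)) * ‖y j - x j‖ ^ 2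
      + (L j / 2 + 1 / (2 * η)) * ‖z j - x j‖ ^ 2
      - (1 / (2 * η)) * ‖y j - z j‖ ^ 2 := by
  have hprox := ((hconv j).strongConvexOn_add_mul_norm_sub_sq (1 / (2 * η)) (x j - η • gj)
    ).le_sub_of_isMinOn (mem_univ _) (isMinOn_univ_iff.2 hyj) (mem_univ (z j))
  simp only [one_div_two_mul_norm_sub_sub_smul_sq hη.ne', norm_sub_rev (z j) (y j)] at hprox
  have hdesc_y := abs_le.1 (PiLp.abs_sub_sub_inner_gradient_apply_le hf (hLip j) hyoff)
  have hdesc_z := abs_le.1 (PiLp.abs_sub_sub_inner_gradient_apply_le hf (hLip j) hzoff)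
  have hsum := Finset.sum_sub_eq_sum_sub_of_eq_of_ne h
    (fun i hi => (hyoff i hi).trans (hzoff i hi).symm)
  have hinner : ⟪gradient f x j - gj, y j - z j⟫ = ⟪gradient f x j, y j - x j⟫
      - ⟪gradient f x j, z j - x j⟫ - ⟪gj, y j - x j⟫ + ⟪gj, z j - x j⟫ := by
    rw [show y j - z j = (y j - x j) - (z j - x j) by abel]
    simp only [inner_sub_left, inner_sub_right]
    ring
  linarith
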